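/- Let (Ω, μ) be a probability space and let ε : Ω → ℝⁿ be an exchangeable random vector. Let R ∈ ℝⁿ have nonincreasing coordinates (R₁ ≥ ⋯ ≥ R_n), let σ be a permutation of {1,…,n}, and write R^σ for the vector with (R^σ)_i = R_{σ(i)}. Let P : ℝⁿ → ℝⁿ be a map such that for every v ∈ ℝⁿ, P v ∈ K_n and ‖v − P v‖ ≤ ‖v − w‖ for all w ∈ K_n. Let U : ℝⁿ → ℝ be measurable and Schur-convex, and assume ω ↦ U(P(R + ε ω)) and ω ↦ U(P(R^σ + ε ω)) are integrable. Then ∫ U(P(R + ε ω)) dμ(ω) ≥ ∫ U(P(R^σ + ε ω)) dμ(ω): under exchangeable noise, a Schur-convex utility of the isotonically adjusted scores is maximized in expectation by the true ranking. -/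

import Mathlib

open MeasureTheory

noncomputable section

/-- The monotone (isotonic) cone of nonincreasing vectors in `ℝⁿ`. -/
def monoCone (n : ℕ) : Set (EuclideanSpace ℝ (Fin n)) :=
  {x | ∀ i j : Fin n, i ≤ j → x j ≤ x i}

/-- `p` is an isotonic projection of `y` onto the monotone cone. -/
def IsIsoProj {n : ℕ} (y p : EuclideanSpace ℝ (Fin n)) : Prop :=
  p ∈ monoCone n ∧ ∀ w ∈ monoCone n, ‖y - p‖ ≤ ‖y - w‖

/-- The sum of the `k` largest entries of `x`. -/
def topKSum {n : ℕ} (x : Fin n → ℝ) (k : ℕ) : ℝ :=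
  sSup ((fun S : Finset (Fin n) => ∑ i ∈ S, x i) '' {S | S.card = k})

/-- `a` majorizes `b`. -/
def Majorizes {n : ℕ} (a b : Fin n → ℝ) : Prop :=
  (∀ k, 1 ≤ k → k ≤ n → topKSum b k ≤ topKSum a k) ∧ ∑ i, a i = ∑ i, b i

/-- A random vector is exchangeable if its law is invariant under coordinate
permutations. -/
def Exchangeable {n : ℕ} {Ω : Type*} [MeasurableSpace Ω] (μ : Measure Ω)
    (ε : Ω → EuclideanSpace ℝ (Fin n)) : Prop :=
  ∀ τ : Equiv.Perm (Fin n),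
    Measure.map (fun ω => (WithLp.toLp 2 (fun i => ε ω (τ i)) : EuclideanSpace ℝ (Fin n))) μ =
      Measure.map ε μ

/-! Pointwise in `ω`, `P (R + ε ω)` majorizes `P (R^σ + ε ω)`, so the inequality already holds
before integrating. Since `R` is sorted, each prefix sum of `R^σ + ε` is at most the
corresponding prefix sum of `R + ε`. Testing the optimality of an isotonic projection `q` of `v`
against `q` shifted up on an initial segment shows that the prefix sums of `q` dominate those
of `v`; testing it against `q` lowered on an initial segment ending at a strict descent shows
that they are affine wherever this domination is strict. Hence the prefix sums of `P (R^σ + ε)`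
are affine off the obstacle formed by the prefix sums of `R^σ + ε`, while those of `P (R + ε)`
form a concave majorant of this obstacle with the same endpoints, and a discrete maximum
principle orders the two. For nonincreasing vectors, prefix sums are the top-`k` sums. -/

open Finset

theorem Finset.sum_le_sum_of_card_eq_of_separated {ι M : Type*} [DecidableEq ι] [AddCommGroup M]
    [LinearOrder M] [IsOrderedAddMonoid M] {s t : Finset ι} {f : ι → M} (c : M)
    (hst : #s = #t) (ht : ∀ i ∈ t, c ≤ f i) (hnt : ∀ i ∉ t, f i ≤ c) :
    ∑ i ∈ s, f i ≤ ∑ i ∈ t, f i := by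
  have key : ∑ i ∈ s, (f i - c) ≤ ∑ i ∈ t, (f i - c) :=
    calc ∑ i ∈ s, (f i - c) = ∑ i ∈ s ∩ t, (f i - c) + ∑ i ∈ s \ t, (f i - c) :=
          (sum_inter_add_sum_sdiff s t _).symm
      _ ≤ ∑ i ∈ s ∩ t, (f i - c) :=
          add_le_of_nonpos_right (sum_nonpos fun i hi => sub_nonpos.2 (hnt i (mem_sdiff.1 hi).2))
      _ ≤ ∑ i ∈ t, (f i - c) :=
          sum_le_sum_of_subset_of_nonneg inter_subset_right fun i hi _ => sub_nonneg.2 (ht i hi)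
  simpa [sum_sub_distrib, hst] using key

section PrefixSum

variable {n : ℕ}

def prefixSum (x : Fin n → ℝ) (k : ℕ) : ℝ :=
  ∑ i ∈ ({i | (i : ℕ) < k} : Finset (Fin n)), x i

@[simp]
lemma prefixSum_zero (x : Fin n → ℝ) : prefixSum x 0 = 0 := by simp [prefixSum]

lemma prefixSum_eq_sum (x : Fin n → ℝ) : prefixSum x n = ∑ i, x i := by simp [prefixSum]

lemma prefixSum_succ (x : Fin n → ℝ) {k : ℕ} (hk : k < n) :
    prefixSum x (k + 1) = prefixSum x k + x ⟨k, hk⟩ := by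
  have : ({i | (i : ℕ) < k + 1} : Finset (Fin n)) =
      cons ⟨k, hk⟩ ({i | (i : ℕ) < k} : Finset (Fin n)) (by simp) := by
    ext i
    simp only [mem_filter, mem_univ, true_and, cons_eq_insert, mem_insert, Fin.ext_iff]
    omega
  rw [prefixSum, this, sum_cons, add_comm]; rfl

lemma prefixSum_add (x y : Fin n → ℝ) (k : ℕ) :
    prefixSum (fun i => x i + y i) k = prefixSum x k + prefixSum y k := sum_add_distrib

lemma Antitone.sum_le_prefixSum {x : Fin n → ℝ} (hx : Antitone x) (s : Finset (Fin n)) :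
    ∑ i ∈ s, x i ≤ prefixSum x #s := by
  rcases hk : #s with _ | k
  · simp [card_eq_zero.1 hk]
  · have hkn : k < n := by simpa [hk] using s.card_le_univ
    refine sum_le_sum_of_card_eq_of_separated (x ⟨k, hkn⟩) ?_ ?_ ?_
    · rw [hk, Fin.card_filter_val_lt]; omega
    · intro i hi
      have hik : (i : ℕ) < k + 1 := (mem_filter.1 hi).2
      exact hx (Fin.le_iff_val_le_val.2 (show (i : ℕ) ≤ k by omega))
    · intro i hi
      have hik : ¬(i : ℕ) < k + 1 := fun h => hi (mem_filter.2 ⟨mem_univ i, h⟩)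
      exact hx (Fin.le_iff_val_le_val.2 (show k ≤ (i : ℕ) by omega))

lemma Antitone.topKSum_eq_prefixSum {x : Fin n → ℝ} (hx : Antitone x) {k : ℕ} (hk : k ≤ n) :
    topKSum x k = prefixSum x k := by
  refine IsGreatest.csSup_eq ⟨⟨({i | (i : ℕ) < k} : Finset (Fin n)), ?_, rfl⟩, ?_⟩
  · simp [Fin.card_filter_val_lt, hk]
  · rintro _ ⟨s, hs, rfl⟩
    simpa [show #s = k from hs] using hx.sum_le_prefixSum s

lemma Antitone.prefixSum_comp_perm_le {x : Fin n → ℝ} (hx : Antitone x)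
    (σ : Equiv.Perm (Fin n)) {k : ℕ} (hk : k ≤ n) : prefixSum (x ∘ σ) k ≤ prefixSum x k :=
  let s : Finset (Fin n) := ({i | (i : ℕ) < k} : Finset (Fin n)).map σ.toEmbedding
  calc prefixSum (x ∘ σ) k = ∑ i ∈ s, x i := by rw [sum_map]; rfl
    _ ≤ prefixSum x k := by
        simpa only [s, card_map, Fin.card_filter_val_lt, min_eq_right hk] using
          hx.sum_le_prefixSum s

end PrefixSum

theorem le_of_concave_majorant {n : ℕ} {Q P Z : ℕ → ℝ} (h0 : Q 0 ≤ P 0) (hn : Q n ≤ P n)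
    (hZP : ∀ k ≤ n, Z k ≤ P k)
    (hQ : ∀ k, k + 2 ≤ n → Z (k + 1) < Q (k + 1) →
      Q (k + 1) - Q k ≤ Q (k + 2) - Q (k + 1))
    (hP : ∀ k, k + 2 ≤ n → P (k + 2) - P (k + 1) ≤ P (k + 1) - P k) :
    ∀ k ≤ n, Q k ≤ P k := by
  by_contra! hpos
  obtain ⟨m, hm, hmax⟩ :=
    exists_max_image (range (n + 1)) (fun k => Q k - P k) nonempty_range_add_one
  have hMpos : 0 < Q m - P m := by
    obtain ⟨k, hk, hlt⟩ := hpos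
    exact (sub_pos.2 hlt).trans_le (hmax k (mem_range.2 (by omega)))
  have hex : ∃ s, s ≤ n ∧ Q m - P m ≤ Q s - P s :=
    ⟨m, Nat.lt_succ_iff.1 (mem_range.1 hm), le_rfl⟩
  -- the first point where `Q - P` attains its maximum
  obtain ⟨hsn, hsM⟩ := Nat.find_spec hex
  obtain ⟨t, ht⟩ : ∃ t, Nat.find hex = t + 1 :=
    Nat.exists_eq_succ_of_ne_zero fun h => by rw [h] at hsM; linarith
  rw [ht] at hsn hsM
  have ht2 : t + 2 ≤ n := by
    by_contra h
    rw [show t + 1 = n by omega] at hsM; linarith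
  have hprev : Q t - P t < Q m - P m := by
    have := Nat.find_min hex (show t < Nat.find hex by omega)
    exact lt_of_not_ge fun h => this ⟨by omega, h⟩
  have hnext : Q (t + 2) - P (t + 2) ≤ Q m - P m := hmax _ (mem_range.2 (by omega))
  have := hQ t ht2 ((hZP _ (by omega)).trans_lt (by linarith))
  linarith [hP t ht2]

section IsoProj

variable {n : ℕ}

lemma mem_monoCone_iff {x : EuclideanSpace ℝ (Fin n)} : x ∈ monoCone n ↔ Antitone x :=
  ⟨fun h i j => h i j, fun h _ _ hij => h hij⟩

lemma convex_monoCone : Convex ℝ (monoCone n) := by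
  intro a ha b hb s t hs ht _ i j hij
  simpa using add_le_add (mul_le_mul_of_nonneg_left (ha i j hij) hs)
    (mul_le_mul_of_nonneg_left (hb i j hij) ht)

variable {v q : EuclideanSpace ℝ (Fin n)}

lemma IsIsoProj.antitone (hq : IsIsoProj v q) : Antitone q := mem_monoCone_iff.1 hq.1

lemma IsIsoProj.inner_sub_nonpos (hq : IsIsoProj v q) {w : EuclideanSpace ℝ (Fin n)}
    (hw : w ∈ monoCone n) : inner ℝ (v - q) (w - q) ≤ 0 := by
  have : Nonempty (monoCone n) := ⟨⟨q, hq.1⟩⟩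
  have hbdd :
      BddBelow (Set.range fun w : monoCone n => ‖v - (w : EuclideanSpace ℝ (Fin n))‖) :=
    ⟨0, by rintro _ ⟨w, rfl⟩; exact norm_nonneg _⟩
  have hmin : ‖v - q‖ = ⨅ w : monoCone n, ‖v - (w : EuclideanSpace ℝ (Fin n))‖ :=
    le_antisymm (le_ciInf fun w => hq.2 w w.2) (ciInf_le hbdd ⟨q, hq.1⟩)
  exact (norm_eq_iInf_iff_real_inner_le_zero convex_monoCone hq.1).1 hmin w hw

lemma IsIsoProj.mul_prefixSum_sub_nonpos (hq : IsIsoProj v q) {c : ℝ} {k : ℕ}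
    (hw : Antitone fun i : Fin n => if (i : ℕ) < k then q i + c else q i) :
    c * (prefixSum v k - prefixSum q k) ≤ 0 := by
  convert hq.inner_sub_nonpos
    (w := WithLp.toLp 2 fun i : Fin n => if (i : ℕ) < k then q i + c else q i)
    (mem_monoCone_iff.2 hw) using 1
  simp only [prefixSum, ← sum_sub_distrib, mul_sum, sum_filter, PiLp.inner_apply,
    PiLp.sub_apply, RCLike.inner_apply, conj_trivial]
  refine sum_congr rfl fun i _ => ?_
  split_ifs <;> ring

lemma IsIsoProj.prefixSum_le (hq : IsIsoProj v q) (k : ℕ) : prefixSum v k ≤ prefixSum q k := by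
  have h := hq.mul_prefixSum_sub_nonpos (c := 1) (k := k) fun i j hij => by
    have := hq.antitone hij
    have := Fin.le_iff_val_le_val.1 hij
    dsimp only
    split_ifs <;> linarith
  linarith

lemma IsIsoProj.sum_eq (hq : IsIsoProj v q) : ∑ i, v i = ∑ i, q i := by
  have hle := hq.prefixSum_le n
  have hge := hq.mul_prefixSum_sub_nonpos (c := -1) (k := n) fun i j hij => by
    simpa using hq.antitone hij
  rw [prefixSum_eq_sum, prefixSum_eq_sum] at hle hge
  linarith

lemma IsIsoProj.le_succ_of_prefixSum_lt (hq : IsIsoProj v q) {t : ℕ} (ht : t + 1 < n)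
    (hlt : prefixSum v (t + 1) < prefixSum q (t + 1)) :
    q ⟨t, by omega⟩ ≤ q ⟨t + 1, ht⟩ := by
  have h := hq.mul_prefixSum_sub_nonpos (c := q ⟨t + 1, ht⟩ - q ⟨t, by omega⟩) (k := t + 1)
    fun i j hij => by
      have hij' := Fin.le_iff_val_le_val.1 hij
      dsimp only
      split_ifs with hj hi hi
      · linarith [hq.antitone hij]
      · omega
      · have hit : q ⟨t, by omega⟩ ≤ q i :=
          hq.antitone (Fin.le_iff_val_le_val.2 (show (i : ℕ) ≤ t by omega))
        have htj : q j ≤ q ⟨t + 1, ht⟩ :=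
          hq.antitone (Fin.le_iff_val_le_val.2 (show t + 1 ≤ (j : ℕ) by omega))
        linarith
      · exact hq.antitone hij
  nlinarith

theorem IsIsoProj.majorizes {y z p q : EuclideanSpace ℝ (Fin n)} (hp : IsIsoProj y p)
    (hq : IsIsoProj z q) (hzy : ∀ k ≤ n, prefixSum z k ≤ prefixSum y k)
    (hsum : ∑ i, z i = ∑ i, y i) : Majorizes p q := by
  have hsum' : ∑ i, p i = ∑ i, q i := by rw [← hp.sum_eq, ← hq.sum_eq, hsum]
  have hQP : ∀ k ≤ n, prefixSum q k ≤ prefixSum p k := by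
    refine le_of_concave_majorant (Z := prefixSum z) (by simp) ?_
      (fun k hk => (hzy k hk).trans (hp.prefixSum_le k)) (fun k hk hlt => ?_) (fun k hk => ?_)
    · rw [prefixSum_eq_sum, prefixSum_eq_sum, hsum']
    · linarith [prefixSum_succ q (show k + 1 < n by omega), prefixSum_succ q (show k < n by omega),
        hq.le_succ_of_prefixSum_lt (by omega) hlt]
    · linarith [prefixSum_succ p (show k + 1 < n by omega), prefixSum_succ p (show k < n by omega),
        hp.antitone (show (⟨k, by omega⟩ : Fin n) ≤ ⟨k + 1, by omega⟩ from
          Fin.le_iff_val_le_val.2 (Nat.le_succ k))]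
  refine ⟨fun k _ hk => ?_, hsum'⟩
  rw [hp.antitone.topKSum_eq_prefixSum hk, hq.antitone.topKSum_eq_prefixSum hk]
  exact hQP k hk

end IsoProj

theorem truthful_ranking_maximizes_schur_convex_utility_general
    {n : ℕ} {Ω : Type*} [MeasurableSpace Ω]
    (μ : Measure Ω)
    (ε : Ω → EuclideanSpace ℝ (Fin n))
    (R : EuclideanSpace ℝ (Fin n)) (hR : ∀ i j : Fin n, i ≤ j → R j ≤ R i)
    (σ : Equiv.Perm (Fin n))
    (P : EuclideanSpace ℝ (Fin n) → EuclideanSpace ℝ (Fin n))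
    (hP : ∀ v, IsIsoProj v (P v))
    (U : EuclideanSpace ℝ (Fin n) → ℝ)
    (hUschur : ∀ a b : Fin n → ℝ, Majorizes a b → U (WithLp.toLp 2 b) ≤ U (WithLp.toLp 2 a))
    (hint_true : Integrable (fun ω => U (P (R + ε ω))) μ)
    (hint_perm : Integrable
      (fun ω => U (P (WithLp.toLp 2 (fun i => R (σ i) + ε ω i) : EuclideanSpace ℝ (Fin n)))) μ) :
    ∫ ω, U (P (WithLp.toLp 2 (fun i => R (σ i) + ε ω i) : EuclideanSpace ℝ (Fin n))) ∂μ ≤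
      ∫ ω, U (P (R + ε ω)) ∂μ := by
  have hR' : Antitone R := mem_monoCone_iff.1 hR
  refine integral_mono hint_perm hint_true fun ω => hUschur _ _ ?_
  refine (hP _).majorizes (hP _) (fun k hk => ?_) ?_
  · calc prefixSum (fun i => R (σ i) + ε ω i) k
          = prefixSum (R ∘ σ) k + prefixSum (ε ω) k := prefixSum_add _ _ k
      _ ≤ prefixSum R k + prefixSum (ε ω) k := by grw [hR'.prefixSum_comp_perm_le σ hk]
      _ = prefixSum (R + ε ω) k := (prefixSum_add _ _ k).symm
  · simp [sum_add_distrib, Equiv.sum_comp σ R]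

/-- Under exchangeable noise, a Schur-convex utility of the isotonically adjusted
scores is maximized in expectation by the true ranking. -/
theorem truthful_ranking_maximizes_schur_convex_utility
    {n : ℕ} {Ω : Type*} [MeasurableSpace Ω]
    (μ : Measure Ω) [IsProbabilityMeasure μ]
    (ε : Ω → EuclideanSpace ℝ (Fin n)) (hε : Exchangeable μ ε)
    (R : EuclideanSpace ℝ (Fin n)) (hR : ∀ i j : Fin n, i ≤ j → R j ≤ R i)
    (σ : Equiv.Perm (Fin n))
    (P : EuclideanSpace ℝ (Fin n) → EuclideanSpace ℝ (Fin n))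
    (hP : ∀ v, IsIsoProj v (P v))
    (U : EuclideanSpace ℝ (Fin n) → ℝ) (hUmeas : Measurable U)
    (hUschur : ∀ a b : Fin n → ℝ, Majorizes a b → U (WithLp.toLp 2 b) ≤ U (WithLp.toLp 2 a))
    (hint_true : Integrable (fun ω => U (P (R + ε ω))) μ)
    (hint_perm : Integrable
      (fun ω => U (P (WithLp.toLp 2 (fun i => R (σ i) + ε ω i) : EuclideanSpace ℝ (Fin n)))) μ) :
    ∫ ω, U (P (WithLp.toLp 2 (fun i => R (σ i) + ε ω i) : EuclideanSpace ℝ (Fin n))) ∂μ ≤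
      ∫ ω, U (P (R + ε ω)) ∂μ :=
  truthful_ranking_maximizes_schur_convex_utility_general μ ε R hR σ P hP U hUschur hint_true
    hint_perm
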